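/- Suppose Ξ = {ξ₁,…,ξ_s} is a finite set, μ = Σ_{k=1}^s p_k δ_{ξ_k} and μ^ν = Σ_{k=1}^s p_k^ν δ_{ξ_k} with p, p^ν in the simplex Δ_s. Let g₀ : ℝⁿ → [-∞,∞] be proper lsc, h : ℝ^m → [-∞,∞] be proper, lsc and nondecreasing, and G : Ξ × ℝⁿ → ℝ^m a mapping whose component functions g_i(ξ_k,·) are locally bounded and lsc for each k. Take G^ν = G. If argmin φ ≠ ∅, λ^ν ∈ (0,∞) → 0 and (1/λ^ν)‖p − p^ν‖₂^α → 0, then f^ν epi-converges to f; in particular limsup_ν (inf f^ν) ≤ inf f = inf φ, and for any ε^ν ∈ [0,∞) → ε one has LimOut(ε^ν-argmin f^ν) ⊆ ε-argmin f = {0} × (ε-argmin φ). -/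

import Mathlib

open MeasureTheory Filter Topology Metric Set Pointwise

noncomputable section

/-- Euclidean (ℓ²) norm on `Fin m → ℝ`. -/
def en2 {m : ℕ} (u : Fin m → ℝ) : ℝ := Real.sqrt (∑ i, u i ^ 2)

/-- ε-argmin of an extended-real-valued function. -/
def eArgmin {γ : Type*} (ψ : γ → EReal) (ε : ℝ) : Set γ :=
  {z | ψ z ≠ ⊤ ∧ ψ z ≤ (⨅ w, ψ w) + (ε : EReal)}

/-- Outer limit of a sequence of sets: limits of subsequences of points from the sets. -/
def LimOut {γ : Type*} [TopologicalSpace γ] (C : ℕ → Set γ) : Set γ :=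
  {z | ∃ N : ℕ → ℕ, StrictMono N ∧ ∃ zs : ℕ → γ, (∀ k, zs k ∈ C (N k)) ∧
    Tendsto zs atTop (𝓝 z)}

/-- Epi-convergence of extended-real-valued functions. -/
def EpiConverges {γ : Type*} [TopologicalSpace γ] (fs : ℕ → γ → EReal) (f : γ → EReal) : Prop :=
  ∀ z : γ,
    (∀ zs : ℕ → γ, Tendsto zs atTop (𝓝 z) → f z ≤ liminf (fun ν => fs ν (zs ν)) atTop) ∧
    (∃ zs : ℕ → γ, Tendsto zs atTop (𝓝 z) ∧ limsup (fun ν => fs ν (zs ν)) atTop ≤ f z)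



section AuxLemmas

lemma ereal_exists_real_lt (a : EReal) (h : a ≠ ⊥) : ∃ c : ℝ, (c:EReal) < a := by
  have : (⊥ : EReal) < a := bot_lt_iff_ne_bot.2 h
  obtain ⟨y, hy1, hy2⟩ := EReal.exists_between_coe_real this
  exact ⟨y, hy2⟩

lemma ereal_lt_add_split {a1 a2 b : EReal} (h1 : a1 ≠ ⊥) (h2 : a2 ≠ ⊥)
    (hb : b < a1 + a2) : ∃ c1 c2 : ℝ, (c1:EReal) < a1 ∧ (c2:EReal) < a2 ∧
      b ≤ ((c1 + c2 : ℝ) : EReal) := by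
  obtain ⟨r1, hr1⟩ := ereal_exists_real_lt a1 h1
  obtain ⟨r2, hr2⟩ := ereal_exists_real_lt a2 h2
  induction b with
  | bot => exact ⟨r1, r2, hr1, hr2, bot_le⟩
  | top => exact absurd hb (not_top_lt)
  | coe br =>
    induction a1 with
    | bot => exact absurd rfl h1
    | top => exact ⟨br - r2, r2, EReal.coe_lt_top _, hr2, by norm_num⟩
    | coe s1 =>
      induction a2 with
      | bot => exact absurd rfl h2
      | top => exact ⟨r1, br - r1, hr1, EReal.coe_lt_top _, by norm_num⟩
      | coe s2 =>
        have hbr : br < s1 + s2 := by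
          have := hb
          rw [← EReal.coe_add] at this
          exact_mod_cast this
        refine ⟨s1 - (s1 + s2 - br)/2, s2 - (s1 + s2 - br)/2, ?_, ?_, ?_⟩
        · exact_mod_cast by linarith
        · exact_mod_cast by linarith
        · exact_mod_cast le_of_eq (by ring)

lemma le_liminf_of_forall_real (u : ℕ → EReal) (a : EReal)
    (H : ∀ b : ℝ, (b:EReal) < a → ∀ᶠ ν in atTop, (b:EReal) ≤ u ν) :
    a ≤ liminf u atTop := by
  by_contra hc
  push_neg at hc
  obtain ⟨b, hb1, hb2⟩ := EReal.exists_between_coe_real hc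
  exact absurd (le_liminf_of_le (by isBoundedDefault) (H b hb2)) (not_le.2 hb1)

lemma en2_nonneg {m : ℕ} (u : Fin m → ℝ) : 0 ≤ en2 u := Real.sqrt_nonneg _

lemma abs_le_en2 {m : ℕ} (u : Fin m → ℝ) (i : Fin m) : |u i| ≤ en2 u := by
  rw [← Real.sqrt_sq_eq_abs]
  exact Real.sqrt_le_sqrt (Finset.single_le_sum (fun j _ => sq_nonneg (u j)) (Finset.mem_univ i))

lemma en2_le_of_forall {m : ℕ} (u : Fin m → ℝ) (t : ℝ) (ht : 0 ≤ t)
    (H : ∀ i, |u i| ≤ t) : en2 u ≤ Real.sqrt m * t := by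
  have h1 : ∑ i, u i ^ 2 ≤ (m : ℝ) * t ^ 2 := by
    calc ∑ i, u i ^ 2 ≤ ∑ _i : Fin m, t ^ 2 := by
          refine Finset.sum_le_sum (fun i _ => ?_)
          rw [← sq_abs]
          exact pow_le_pow_left₀ (abs_nonneg _) (H i) 2
      _ = (m : ℝ) * t ^ 2 := by
          rw [Finset.sum_const, Finset.card_univ, Fintype.card_fin, nsmul_eq_mul]
  calc en2 u ≤ Real.sqrt ((m:ℝ) * t ^ 2) := Real.sqrt_le_sqrt h1
    _ = Real.sqrt m * t := by
        rw [Real.sqrt_mul (Nat.cast_nonneg m), Real.sqrt_sq ht]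

lemma en2_pos {m : ℕ} (u : Fin m → ℝ) (hu : u ≠ 0) : 0 < en2 u := by
  rcases lt_or_eq_of_le (en2_nonneg u) with h | h
  · exact h
  · exfalso
    apply hu
    funext i
    have h2 : ∑ j, u j ^ 2 = 0 := by
      have hle : ∑ j, u j ^ 2 ≤ 0 := Real.sqrt_eq_zero'.mp h.symm
      exact le_antisymm hle (Finset.sum_nonneg fun j _ => sq_nonneg _)
    have := (Finset.sum_eq_zero_iff_of_nonneg (fun j _ => sq_nonneg (u j))).mp h2 i (Finset.mem_univ i)
    exact pow_eq_zero_iff two_ne_zero |>.mp this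

lemma en2_continuous {m : ℕ} : Continuous fun u : Fin m → ℝ => en2 u :=
  Real.continuous_sqrt.comp (continuous_finset_sum _ fun i _ => (continuous_apply i).pow 2)

lemma rate_to_zero (lam : ℕ → ℝ) (hlam : ∀ ν, 0 < lam ν)
    (hlam0 : Tendsto lam atTop (𝓝 0)) (d : ℕ → ℝ) (hd : ∀ ν, 0 ≤ d ν)
    (α : ℝ) (hα : 1 ≤ α)
    (hrate : Tendsto (fun ν => (1 / lam ν) * d ν ^ α) atTop (𝓝 0)) :
    Tendsto d atTop (𝓝 0) := by
  have hα0 : 0 < α := lt_of_lt_of_le one_pos hα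
  have hpow : Tendsto (fun ν => d ν ^ α) atTop (𝓝 0) := by
    have heq : (fun ν => d ν ^ α) = fun ν => lam ν * ((1 / lam ν) * d ν ^ α) := by
      funext ν
      field_simp
      rw [mul_div_cancel_right₀ _ (ne_of_gt (hlam ν))]
    rw [heq]
    simpa using hlam0.mul hrate
  rw [NormedAddCommGroup.tendsto_nhds_zero]
  intro ε hε
  have hev := (NormedAddCommGroup.tendsto_nhds_zero.mp hpow) (ε ^ α) (Real.rpow_pos_of_pos hε α)
  filter_upwards [hev] with ν hν
  rw [Real.norm_eq_abs, abs_of_nonneg (hd ν)]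
  by_contra hcon
  push_neg at hcon
  have hle : ε ^ α ≤ d ν ^ α := Real.rpow_le_rpow (le_of_lt hε) hcon hα0.le
  rw [Real.norm_eq_abs, abs_of_nonneg (Real.rpow_nonneg (hd ν) α)] at hν
  linarith

lemma pen_div (lam : ℕ → ℝ) (hlam : ∀ ν, 0 < lam ν)
    (hlam0 : Tendsto lam atTop (𝓝 0)) (α : ℝ) (hα : 1 ≤ α)
    (e : ℕ → ℝ) (c : ℝ) (hc : 0 < c) (he : Tendsto e atTop (𝓝 c)) :
    Tendsto (fun ν => (1 / (α * lam ν)) * e ν ^ α) atTop atTop := by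
  have hα0 : 0 < α := lt_of_lt_of_le one_pos hα
  have h1 : Tendsto (fun ν => α * lam ν) atTop (𝓝[>] 0) := by
    apply tendsto_nhdsWithin_of_tendsto_nhds_of_eventually_within
    · simpa using tendsto_const_nhds.mul hlam0
    · exact Eventually.of_forall fun ν => mul_pos hα0 (hlam ν)
  have h2 : Tendsto (fun ν => (α * lam ν)⁻¹) atTop atTop :=
    tendsto_inv_nhdsGT_zero.comp h1
  have h3 : Tendsto (fun ν => e ν ^ α) atTop (𝓝 (c ^ α)) := by
    have hcont : ContinuousAt (fun t : ℝ => t ^ α) c :=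
      Real.continuousAt_rpow_const c α (Or.inl (ne_of_gt hc))
    exact hcont.tendsto.comp he
  simpa [one_div] using h2.atTop_mul_pos (Real.rpow_pos_of_pos hc α) h3

lemma G_unif_bound {n m s : ℕ} (G : Fin s → EuclideanSpace ℝ (Fin n) → Fin m → ℝ)
    (hGbd : ∀ k x, ∃ ε > 0, ∃ M : ℝ, ∀ y ∈ closedBall x ε, ∀ i, |G k y i| ≤ M)
    (x : EuclideanSpace ℝ (Fin n)) :
    ∃ ε > 0, ∃ M : ℝ, 0 ≤ M ∧ ∀ y ∈ closedBall x ε, ∀ k i, |G k y i| ≤ M := by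
  choose εf hεf Mf hMf using fun k => hGbd k x
  rcases isEmpty_or_nonempty (Fin s) with hs | hs
  · exact ⟨1, one_pos, 0, le_refl 0, fun y _ k => (IsEmpty.false k).elim⟩
  · refine ⟨Finset.univ.inf' Finset.univ_nonempty εf, ?_,
      max 0 (Finset.univ.sup' Finset.univ_nonempty Mf), le_max_left _ _, ?_⟩
    · exact (Finset.lt_inf'_iff _).mpr fun k _ => hεf k
    · intro y hy k i
      have h1 : y ∈ closedBall x (εf k) :=
        closedBall_subset_closedBall (Finset.inf'_le _ (Finset.mem_univ k)) hy
      exact le_trans (hMf k y h1 i)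
        (le_trans (Finset.le_sup' Mf (Finset.mem_univ k)) (le_max_right _ _))

lemma key_lower_bound {n m s : ℕ}
    (p : Fin s → ℝ) (hp0 : ∀ k, 0 ≤ p k) (hp1 : ∑ k, p k = 1)
    (ps : ℕ → Fin s → ℝ)
    (G : Fin s → EuclideanSpace ℝ (Fin n) → Fin m → ℝ)
    (hGlsc : ∀ k i, LowerSemicontinuous fun x => G k x i)
    (hGbd : ∀ k x, ∃ ε > 0, ∃ M : ℝ, ∀ y ∈ closedBall x ε, ∀ i, |G k y i| ≤ M)
    (x : EuclideanSpace ℝ (Fin n)) (us : ℕ → Fin m → ℝ) (xs : ℕ → EuclideanSpace ℝ (Fin n))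
    (hus : Tendsto us atTop (𝓝 0)) (hxs : Tendsto xs atTop (𝓝 x))
    (hd : Tendsto (fun ν => en2 (p - ps ν)) atTop (𝓝 0))
    (δ : ℝ) (hδ : 0 < δ) :
    ∀ᶠ ν in atTop, ∀ i, (∑ k, p k * G k x i) - δ ≤ us ν i + ∑ k, ps ν k * G k (xs ν) i := by
  obtain ⟨ε, hε, M, hM0, hMb⟩ := G_unif_bound G hGbd x
  have ev1 : ∀ᶠ ν in atTop, xs ν ∈ closedBall x ε :=
    hxs.eventually (closedBall_mem_nhds x hε)
  have ev2 : ∀ᶠ ν in atTop, ∀ k i, G k x i - δ/3 < G k (xs ν) i := by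
    have hy : ∀ᶠ y in 𝓝 x, ∀ k i, G k x i - δ/3 < G k y i := by
      rw [eventually_all]
      intro k
      rw [eventually_all]
      intro i
      exact hGlsc k i x (G k x i - δ/3) (by linarith)
    exact hxs.eventually hy
  have ev3 : ∀ᶠ ν in atTop, ∀ i, |us ν i| ≤ δ/3 := by
    have := (NormedAddCommGroup.tendsto_nhds_zero.mp hus) (δ/3) (by linarith)
    filter_upwards [this] with ν hν i
    calc |us ν i| = ‖us ν i‖ := (Real.norm_eq_abs _).symm
      _ ≤ ‖us ν‖ := norm_le_pi_norm (us ν) i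
      _ ≤ δ/3 := hν.le
  have ev4 : ∀ᶠ ν in atTop, en2 (p - ps ν) < δ/(3*(s*M+1)) := by
    have hpos : 0 < δ/(3*(s*M+1)) := by positivity
    have := (NormedAddCommGroup.tendsto_nhds_zero.mp hd) _ hpos
    filter_upwards [this] with ν hν
    calc en2 (p - ps ν) ≤ |en2 (p - ps ν)| := le_abs_self _
      _ < _ := by rwa [Real.norm_eq_abs] at hν
  filter_upwards [ev1, ev2, ev3, ev4] with ν h1 h2 h3 h4 i
  have hdec : ∑ k, ps ν k * G k (xs ν) i
      = (∑ k, (ps ν k - p k) * G k (xs ν) i) + (∑ k, p k * (G k (xs ν) i - G k x i))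
        + ∑ k, p k * G k x i := by
    rw [← Finset.sum_add_distrib, ← Finset.sum_add_distrib]
    exact Finset.sum_congr rfl (fun k _ => by ring)
  have hT1 : -(δ/3) ≤ ∑ k, (ps ν k - p k) * G k (xs ν) i := by
    have habs : |∑ k, (ps ν k - p k) * G k (xs ν) i| ≤ δ/3 := by
      calc |∑ k, (ps ν k - p k) * G k (xs ν) i| ≤ ∑ k, |(ps ν k - p k) * G k (xs ν) i| :=
            Finset.abs_sum_le_sum_abs _ _
        _ ≤ ∑ k, en2 (p - ps ν) * M := by
            refine Finset.sum_le_sum (fun k _ => ?_)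
            rw [abs_mul]
            have ha : |ps ν k - p k| ≤ en2 (p - ps ν) := by
              have := abs_le_en2 (p - ps ν) k
              simpa [abs_sub_comm] using this
            exact mul_le_mul ha (hMb (xs ν) h1 k i) (abs_nonneg _) (le_trans (abs_nonneg _) ha)
        _ = s * en2 (p - ps ν) * M := by
            rw [Finset.sum_const, Finset.card_univ, Fintype.card_fin, nsmul_eq_mul]; ring
        _ ≤ δ/3 := by
            have hen : 0 ≤ en2 (p - ps ν) := Real.sqrt_nonneg _
            have hb : (s:ℝ) * en2 (p - ps ν) * M ≤ (s*M+1) * en2 (p - ps ν) := by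
              nlinarith [hen]
            have hc : (s*M+1) * en2 (p - ps ν) ≤ (s*M+1) * (δ/(3*(s*M+1))) := by
              apply mul_le_mul_of_nonneg_left h4.le
              positivity
            have hd2 : (s*M+1) * (δ/(3*(s*M+1))) = δ/3 := by
              field_simp
            linarith
    linarith [neg_abs_le (∑ k, (ps ν k - p k) * G k (xs ν) i)]
  have hT2 : -(δ/3) ≤ ∑ k, p k * (G k (xs ν) i - G k x i) := by
    calc -(δ/3) = ∑ k, p k * (-(δ/3)) := by
          rw [← Finset.sum_mul, hp1, one_mul]
      _ ≤ ∑ k, p k * (G k (xs ν) i - G k x i) := by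
          refine Finset.sum_le_sum (fun k _ => ?_)
          exact mul_le_mul_of_nonneg_left (by linarith [h2 k i]) (hp0 k)
  have hu : -(δ/3) ≤ us ν i := by linarith [abs_le.mp (h3 i) |>.1]
  rw [hdec]
  linarith

end AuxLemmas

set_option maxHeartbeats 2000000 in
/-- Corollary 2.3 (finite distribution). -/
theorem finite_distribution_corollary
    {n m s : ℕ}
    (p : Fin s → ℝ) (hp0 : ∀ k, 0 ≤ p k) (hp1 : ∑ k, p k = 1)
    (ps : ℕ → Fin s → ℝ) (hps0 : ∀ ν k, 0 ≤ ps ν k) (hps1 : ∀ ν, ∑ k, ps ν k = 1)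
    (g0 : EuclideanSpace ℝ (Fin n) → EReal)
    (hg0lsc : LowerSemicontinuous g0)
    (hg0bot : ∀ x, g0 x ≠ ⊥) (hg0top : ∃ x, g0 x ≠ ⊤)
    (h : (Fin m → ℝ) → EReal)
    (hhlsc : LowerSemicontinuous h)
    (hhbot : ∀ u, h u ≠ ⊥) (hhtop : ∃ u, h u ≠ ⊤)
    (hhmono : ∀ u v : Fin m → ℝ, (∀ i, u i ≤ v i) → h u ≤ h v)
    (G : Fin s → EuclideanSpace ℝ (Fin n) → Fin m → ℝ)
    (hGlsc : ∀ k i, LowerSemicontinuous fun x => G k x i)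
    (hGbd : ∀ k x, ∃ ε > 0, ∃ M : ℝ, ∀ y ∈ closedBall x ε, ∀ i, |G k y i| ≤ M)
    (α : ℝ) (hα : 1 ≤ α)
    (lam : ℕ → ℝ) (hlam : ∀ ν, 0 < lam ν) (hlam0 : Tendsto lam atTop (𝓝 0))
    (hrate : Tendsto (fun ν => (1 / lam ν) * en2 (p - ps ν) ^ α) atTop (𝓝 0))
    (φ : EuclideanSpace ℝ (Fin n) → EReal)
    (hφ : ∀ x, φ x = g0 x + h (∑ k, p k • G k x))
    (hargmin : ∃ x, φ x ≠ ⊤ ∧ φ x = ⨅ y, φ y)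
    (f : (Fin m → ℝ) × EuclideanSpace ℝ (Fin n) → EReal)
    (hf : ∀ u x, f (u, x) = g0 x + h (u + ∑ k, p k • G k x) +
        (if u = 0 then (0 : EReal) else ⊤))
    (fs : ℕ → (Fin m → ℝ) × EuclideanSpace ℝ (Fin n) → EReal)
    (hfs : ∀ ν u x, fs ν (u, x) = g0 x + h (u + ∑ k, ps ν k • G k x) +
        (((1 / (α * lam ν)) * en2 u ^ α : ℝ) : EReal)) :
    EpiConverges fs f ∧
    limsup (fun ν => ⨅ q, fs ν q) atTop ≤ ⨅ q, f q ∧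
    (⨅ q, f q) = ⨅ x, φ x ∧
    (∀ (εs : ℕ → ℝ), (∀ ν, 0 ≤ εs ν) → ∀ ε : ℝ, Tendsto εs atTop (𝓝 ε) →
      LimOut (fun ν => eArgmin (fs ν) (εs ν)) ⊆
        {q : (Fin m → ℝ) × EuclideanSpace ℝ (Fin n) | q.1 = 0 ∧ q.2 ∈ eArgmin φ ε}) := by
  have hα0 : (0:ℝ) < α := lt_of_lt_of_le one_pos hα
  have hsum_apply : ∀ (q : Fin s → ℝ) (y : EuclideanSpace ℝ (Fin n)) (i : Fin m),
      (∑ k, q k • G k y) i = ∑ k, q k * G k y i := by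
    intro q y i
    rw [Finset.sum_apply]
    simp [smul_eq_mul]
  have hd0 : ∀ ν, 0 ≤ en2 (p - ps ν) := fun ν => en2_nonneg _
  have hd : Tendsto (fun ν => en2 (p - ps ν)) atTop (𝓝 0) :=
    rate_to_zero lam hlam hlam0 _ hd0 α hα hrate
  have hpen0 : ∀ ν (v : Fin m → ℝ), (0:ℝ) ≤ 1 / (α * lam ν) * en2 v ^ α := by
    intro ν v
    apply mul_nonneg
    · exact le_of_lt (div_pos one_pos (mul_pos hα0 (hlam ν)))
    · exact Real.rpow_nonneg (en2_nonneg v) α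
  have hφbot : ∀ y, φ y ≠ ⊥ := by
    intro y hb
    rw [hφ] at hb
    rcases EReal.add_eq_bot_iff.mp hb with h' | h'
    exacts [hg0bot y h', hhbot _ h']
  obtain ⟨xstar, hxstar_top, hxstar_min⟩ := hargmin
  have hinf_top : (⨅ y, φ y) ≠ ⊤ := hxstar_min ▸ hxstar_top
  have hinf_bot : (⨅ y, φ y) ≠ ⊥ := hxstar_min ▸ hφbot xstar
  have hf_ne : ∀ (u : Fin m → ℝ) x, u ≠ 0 → f (u, x) = ⊤ := by
    intro u x hu
    rw [hf, if_neg hu]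
    apply EReal.add_top_of_ne_bot
    intro hb
    rcases EReal.add_eq_bot_iff.mp hb with h' | h'
    exacts [hg0bot x h', hhbot _ h']
  have hf0 : ∀ x, f (0, x) = φ x := by
    intro x
    rw [hf, if_pos rfl, add_zero, zero_add, hφ]
  have hfs' : ∀ ν (q : (Fin m → ℝ) × EuclideanSpace ℝ (Fin n)),
      fs ν q = g0 q.2 + h (q.1 + ∑ k, ps ν k • G k q.2)
        + ((1 / (α * lam ν) * en2 q.1 ^ α : ℝ) : EReal) := fun ν q => hfs ν q.1 q.2
  -- ====== Epi-convergence ======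
  have hepi : EpiConverges fs f := by
    rintro ⟨u, x⟩
    constructor
    · -- liminf half
      intro zs hzs
      rw [nhds_prod_eq, tendsto_prod_iff'] at hzs
      obtain ⟨hz1, hz2⟩ := hzs
      by_cases hu : u = 0
      · subst hu
        rw [hf0]
        apply le_liminf_of_forall_real
        intro b hb
        rw [hφ] at hb
        obtain ⟨c1, c2, hc1, hc2, hbc⟩ := ereal_lt_add_split (hg0bot x) (hhbot _) hb
        have hδex : ∃ δ : ℝ, 0 < δ ∧
            (c2 : EReal) < h (fun i => (∑ k, p k • G k x) i - δ) := by
          have hcont : Tendsto (fun δ : ℝ => (fun i => (∑ k, p k • G k x) i - δ))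
              (𝓝 0) (𝓝 (∑ k, p k • G k x)) := by
            rw [tendsto_pi_nhds]
            intro i
            have ht : Tendsto (fun δ : ℝ => (∑ k, p k • G k x) i - δ) (𝓝 0)
                (𝓝 ((∑ k, p k • G k x) i - 0)) := tendsto_const_nhds.sub tendsto_id
            simpa using ht
          have hev := hcont.eventually (hhlsc _ _ hc2)
          have hev' : ∀ᶠ δ in 𝓝[>] (0:ℝ),
              (c2:EReal) < h (fun i => (∑ k, p k • G k x) i - δ) :=
            hev.filter_mono nhdsWithin_le_nhds
          obtain ⟨δ, hδ1, hδ2⟩ := (hev'.and self_mem_nhdsWithin).exists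
          exact ⟨δ, hδ2, hδ1⟩
        obtain ⟨δ, hδpos, hc2δ⟩ := hδex
        have evg : ∀ᶠ ν in atTop, (c1:EReal) < g0 ((zs ν).2) :=
          hz2.eventually (hg0lsc x _ hc1)
        have evh := key_lower_bound p hp0 hp1 ps G hGlsc hGbd x
          (fun ν => (zs ν).1) (fun ν => (zs ν).2) hz1 hz2 hd δ hδpos
        filter_upwards [evg, evh] with ν hg hkey
        have hmono : h (fun i => (∑ k, p k • G k x) i - δ)
            ≤ h ((zs ν).1 + ∑ k, ps ν k • G k (zs ν).2) := by
          apply hhmono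
          intro i
          show (∑ k, p k • G k x) i - δ ≤ ((zs ν).1 + ∑ k, ps ν k • G k (zs ν).2) i
          rw [Pi.add_apply, hsum_apply, hsum_apply]
          linarith [hkey i]
        calc (b:EReal) ≤ ((c1 + c2 : ℝ):EReal) := hbc
          _ = (c1:EReal) + (c2:EReal) := EReal.coe_add c1 c2
          _ ≤ g0 ((zs ν).2) + h ((zs ν).1 + ∑ k, ps ν k • G k (zs ν).2) :=
              add_le_add hg.le (le_trans hc2δ.le hmono)
          _ ≤ g0 ((zs ν).2) + h ((zs ν).1 + ∑ k, ps ν k • G k (zs ν).2)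
              + ((1 / (α * lam ν) * en2 ((zs ν).1) ^ α : ℝ) : EReal) :=
              le_add_of_nonneg_right (by exact_mod_cast hpen0 ν ((zs ν).1))
          _ = fs ν (zs ν) := (hfs' ν (zs ν)).symm
      · rw [hf_ne u x hu]
        apply le_liminf_of_forall_real
        intro b _
        obtain ⟨c1, hc1⟩ := ereal_exists_real_lt (g0 x) (hg0bot x)
        obtain ⟨ε, hε, M, hM0, hMb⟩ := G_unif_bound G hGbd x
        obtain ⟨c2, hc2⟩ := ereal_exists_real_lt (h (fun _ => -(‖u‖ + 1 + M))) (hhbot _)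
        have evg : ∀ᶠ ν in atTop, (c1:EReal) < g0 ((zs ν).2) :=
          hz2.eventually (hg0lsc x _ hc1)
        have evball : ∀ᶠ ν in atTop, (zs ν).2 ∈ closedBall x ε :=
          hz2.eventually (closedBall_mem_nhds x hε)
        have evu : ∀ᶠ ν in atTop, ‖(zs ν).1‖ ≤ ‖u‖ + 1 :=
          Tendsto.eventually_le_const (by linarith) hz1.norm
        have hen : Tendsto (fun ν => en2 ((zs ν).1)) atTop (𝓝 (en2 u)) :=
          (en2_continuous.tendsto u).comp hz1
        have hpen : Tendsto (fun ν => 1 / (α * lam ν) * en2 ((zs ν).1) ^ α) atTop atTop :=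
          pen_div lam hlam hlam0 α hα _ _ (en2_pos u hu) hen
        have evpen : ∀ᶠ ν in atTop, b - c1 - c2 ≤ 1 / (α * lam ν) * en2 ((zs ν).1) ^ α :=
          hpen.eventually_ge_atTop _
        filter_upwards [evg, evball, evu, evpen] with ν hg hball hu1 hp2
        have hvlow : ∀ i, -(‖u‖ + 1 + M) ≤ ((zs ν).1 + ∑ k, ps ν k • G k (zs ν).2) i := by
          intro i
          rw [Pi.add_apply, hsum_apply]
          have h1 : -(‖u‖+1) ≤ (zs ν).1 i := by
            have ha := norm_le_pi_norm ((zs ν).1) i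
            rw [Real.norm_eq_abs] at ha
            have hb := abs_le.mp (le_trans ha hu1)
            linarith [hb.1]
          have h2 : -M ≤ ∑ k, ps ν k * G k ((zs ν).2) i := by
            have habs : |∑ k, ps ν k * G k ((zs ν).2) i| ≤ M := by
              calc |∑ k, ps ν k * G k ((zs ν).2) i|
                  ≤ ∑ k, |ps ν k * G k ((zs ν).2) i| := Finset.abs_sum_le_sum_abs _ _
                _ ≤ ∑ k, ps ν k * M := by
                    refine Finset.sum_le_sum fun k _ => ?_
                    rw [abs_mul, abs_of_nonneg (hps0 ν k)]
                    exact mul_le_mul_of_nonneg_left (hMb _ hball k i) (hps0 ν k)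
                _ = M := by rw [← Finset.sum_mul, hps1 ν, one_mul]
            linarith [neg_abs_le (∑ k, ps ν k * G k ((zs ν).2) i), habs]
          linarith
        have hmono2 : h (fun _ => -(‖u‖ + 1 + M))
            ≤ h ((zs ν).1 + ∑ k, ps ν k • G k (zs ν).2) := hhmono _ _ hvlow
        calc (b:EReal) = ((c1 + c2 + (b - c1 - c2) : ℝ) : EReal) := by norm_num
          _ = (c1:EReal) + (c2:EReal) + ((b - c1 - c2 : ℝ):EReal) := by
              rw [EReal.coe_add, EReal.coe_add]
          _ ≤ g0 ((zs ν).2) + h ((zs ν).1 + ∑ k, ps ν k • G k (zs ν).2)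
              + ((1 / (α * lam ν) * en2 ((zs ν).1) ^ α : ℝ):EReal) :=
            add_le_add (add_le_add hg.le (le_trans hc2.le hmono2))
              (EReal.coe_le_coe_iff.mpr hp2)
          _ = fs ν (zs ν) := (hfs' ν (zs ν)).symm
    · -- limsup half (recovery sequence)
      by_cases hu : u = 0
      · subst hu
        obtain ⟨ε, hε, M, hM0, hMb⟩ := G_unif_bound G hGbd x
        have hMx : ∀ k i, |G k x i| ≤ M := hMb x (mem_closedBall_self hε.le)
        set us : ℕ → Fin m → ℝ := fun ν i => ∑ k, (p k - ps ν k) * G k x i with hus_def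
        have husbd : ∀ ν i, |us ν i| ≤ (s * M) * en2 (p - ps ν) := by
          intro ν i
          calc |us ν i| ≤ ∑ k, |(p k - ps ν k) * G k x i| := Finset.abs_sum_le_sum_abs _ _
            _ ≤ ∑ k, en2 (p - ps ν) * M := by
                refine Finset.sum_le_sum fun k _ => ?_
                rw [abs_mul]
                have ha : |p k - ps ν k| ≤ en2 (p - ps ν) := by
                  have := abs_le_en2 (p - ps ν) k
                  simpa using this
                exact mul_le_mul ha (hMx k i) (abs_nonneg _) (hd0 ν)
            _ = (s * M) * en2 (p - ps ν) := by
                rw [Finset.sum_const, Finset.card_univ, Fintype.card_fin, nsmul_eq_mul]; ring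
        have hus0 : Tendsto us atTop (𝓝 0) := by
          rw [tendsto_pi_nhds]
          intro i
          apply squeeze_zero_norm (a := fun ν => (s*M) * en2 (p - ps ν))
          · intro ν; rw [Real.norm_eq_abs]; exact husbd ν i
          · simpa using tendsto_const_nhds.mul hd
        have hzs : Tendsto (fun ν => (us ν, x)) atTop (𝓝 ((0 : Fin m → ℝ), x)) :=
          hus0.prodMk_nhds tendsto_const_nhds
        refine ⟨fun ν => (us ν, x), hzs, ?_⟩
        have hval : ∀ ν, us ν + ∑ k, ps ν k • G k x = ∑ k, p k • G k x := by
          intro ν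
          funext i
          have hus_i : us ν i = ∑ k, (p k - ps ν k) * G k x i := rfl
          rw [Pi.add_apply, hsum_apply, hsum_apply, hus_i, ← Finset.sum_add_distrib]
          exact Finset.sum_congr rfl fun k _ => by ring
        have hfsval : ∀ ν, fs ν (us ν, x)
            = g0 x + h (∑ k, p k • G k x)
              + ((1 / (α * lam ν) * en2 (us ν) ^ α : ℝ):EReal) := by
          intro ν
          rw [hfs ν (us ν) x, hval ν]
        by_cases htop : g0 x + h (∑ k, p k • G k x) = ⊤
        · rw [hf0, hφ, htop]
          exact le_top
        · have hbot : g0 x + h (∑ k, p k • G k x) ≠ ⊥ := by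
            intro hb
            rcases EReal.add_eq_bot_iff.mp hb with h' | h'
            exacts [hg0bot x h', hhbot _ h']
          set r : ℝ := (g0 x + h (∑ k, p k • G k x)).toReal with hrdef
          have hrr : ((r:ℝ):EReal) = g0 x + h (∑ k, p k • G k x) :=
            EReal.coe_toReal htop hbot
          have hC0 : (0:ℝ) ≤ Real.sqrt m * (s * M) := by positivity
          have hpenb : Tendsto (fun ν => 1 / (α * lam ν) * en2 (us ν) ^ α) atTop (𝓝 0) := by
            apply squeeze_zero (fun ν => hpen0 ν (us ν))
              (g := fun ν => ((Real.sqrt m * (s*M)) ^ α / α) * (1 / lam ν * en2 (p - ps ν) ^ α))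
            · intro ν
              have h1 : en2 (us ν) ≤ (Real.sqrt m * (s*M)) * en2 (p - ps ν) := by
                have := en2_le_of_forall (us ν) ((s*M) * en2 (p - ps ν))
                  (mul_nonneg (by positivity) (hd0 ν)) (husbd ν)
                calc en2 (us ν) ≤ Real.sqrt m * ((s*M) * en2 (p - ps ν)) := this
                  _ = (Real.sqrt m * (s*M)) * en2 (p - ps ν) := by ring
              calc 1 / (α * lam ν) * en2 (us ν) ^ α
                  ≤ 1 / (α * lam ν) * ((Real.sqrt m * (s*M)) * en2 (p - ps ν)) ^ α := by
                    apply mul_le_mul_of_nonneg_left _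
                      (le_of_lt (div_pos one_pos (mul_pos hα0 (hlam ν))))
                    exact Real.rpow_le_rpow (en2_nonneg _) h1 hα0.le
                _ = ((Real.sqrt m * (s*M)) ^ α / α) * (1 / lam ν * en2 (p - ps ν) ^ α) := by
                    rw [Real.mul_rpow hC0 (hd0 ν)]
                    field_simp
            · simpa using tendsto_const_nhds.mul hrate
          have heq : ∀ ν, fs ν (us ν, x)
              = (((r + 1 / (α * lam ν) * en2 (us ν) ^ α) : ℝ) : EReal) := by
            intro ν
            rw [hfsval ν, ← hrr, ← EReal.coe_add]
          have htends : Tendsto (fun ν => fs ν (us ν, x)) atTop (𝓝 ((r:ℝ):EReal)) := by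
            rw [show (fun ν => fs ν (us ν, x))
                = fun ν => (((r + 1 / (α * lam ν) * en2 (us ν) ^ α) : ℝ) : EReal)
              from funext heq]
            exact (continuous_coe_real_ereal.tendsto r).comp
              (by simpa using tendsto_const_nhds.add hpenb)
          rw [htends.limsup_eq, hf0, hφ, ← hrr]
      · refine ⟨fun _ => (u, x), tendsto_const_nhds, ?_⟩
        rw [hf_ne u x hu]
        exact le_top
  -- ====== limsup of infima ======
  have hpart2 : limsup (fun ν => ⨅ q, fs ν q) atTop ≤ ⨅ q, f q := by
    refine le_iInf fun q => ?_
    obtain ⟨zs, hzs, hls⟩ := (hepi q).2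
    exact le_trans (limsup_le_limsup (Eventually.of_forall fun ν => iInf_le _ (zs ν))) hls
  -- ====== equality of infima ======
  have hpart3 : (⨅ q, f q) = ⨅ y, φ y := by
    apply le_antisymm
    · refine le_iInf fun y => ?_
      exact le_trans (iInf_le _ ((0 : Fin m → ℝ), y)) (le_of_eq (hf0 y))
    · refine le_iInf fun q => ?_
      by_cases hq : q.1 = 0
      · have hq' : q = ((0 : Fin m → ℝ), q.2) := by rw [← hq]
        rw [hq', hf0]
        exact iInf_le _ q.2
      · rw [show f q = ⊤ from hf_ne q.1 q.2 hq]
        exact le_top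
  refine ⟨hepi, hpart2, hpart3, ?_⟩
  -- ====== outer limit of eps-argmins ======
  intro εs hεs0 ε hεs z hz
  obtain ⟨N, hN, zs, hmem, hzsq⟩ := hz
  classical
  set ws : ℕ → (Fin m → ℝ) × EuclideanSpace ℝ (Fin n) :=
    fun ν => if hh : ∃ k, N k = ν then zs hh.choose else z with hws_def
  have hws_at : ∀ k, ws (N k) = zs k := by
    intro k
    have hex : ∃ j, N j = N k := ⟨k, rfl⟩
    rw [hws_def]
    simp only [dif_pos hex]
    exact congrArg zs (hN.injective hex.choose_spec)
  have hws_tendsto : Tendsto ws atTop (𝓝 z) := by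
    rw [Filter.tendsto_atTop']
    intro U hU
    obtain ⟨K, hK⟩ := (Filter.tendsto_atTop'.mp hzsq) U hU
    refine ⟨N K, fun ν hν => ?_⟩
    by_cases hh : ∃ k, N k = ν
    · have hj : N hh.choose = ν := hh.choose_spec
      have hjK : K ≤ hh.choose := (hN.le_iff_le).mp (le_of_le_of_eq hν hj.symm)
      have hwseq : ws ν = zs hh.choose := by rw [hws_def]; simp only [dif_pos hh]
      rw [hwseq]
      exact hK _ hjK
    · have hwseq : ws ν = z := by rw [hws_def]; simp only [dif_neg hh]
      rw [hwseq]
      exact mem_of_mem_nhds hU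
  have key1 : f z ≤ liminf (fun k => fs (N k) (zs k)) atTop := by
    refine le_trans ((hepi z).1 ws hws_tendsto) ?_
    have hsub : liminf (fun ν => fs ν (ws ν)) atTop
        ≤ liminf (fun ν => fs ν (ws ν)) (map N atTop) :=
      liminf_le_liminf_of_le hN.tendsto_atTop isBounded_ge_of_bot isCobounded_ge_of_top
    rw [← liminf_comp] at hsub
    have hsub : liminf (fun ν => fs ν (ws ν)) atTop
        ≤ liminf (fun k => fs (N k) (ws (N k))) atTop := hsub
    rw [show (fun k => fs (N k) (ws (N k))) = (fun k => fs (N k) (zs k))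
      from funext fun k => by rw [hws_at k]] at hsub
    exact hsub
  set r0 : ℝ := (⨅ y, φ y).toReal with hr0def
  have hr0 : ((r0:ℝ):EReal) = ⨅ y, φ y := EReal.coe_toReal hinf_top hinf_bot
  have keysub : limsup (fun k => ⨅ q, fs (N k) q) atTop ≤ (r0 : EReal) := by
    have hsub2 : limsup (fun ν => ⨅ q, fs ν q) (map N atTop)
        ≤ limsup (fun ν => ⨅ q, fs ν q) atTop :=
      limsup_le_limsup_of_le hN.tendsto_atTop isCobounded_le_of_bot isBounded_le_of_top
    rw [← limsup_comp] at hsub2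
    refine le_trans hsub2 ?_
    rw [hr0, ← hpart3]
    exact hpart2
  have hδb : ∀ δ : ℝ, 0 < δ → f z ≤ ((r0 + ε + 2*δ : ℝ) : EReal) := by
    intro δ hδ
    have hev2 : ∀ᶠ k in atTop, (⨅ q, fs (N k) q) < ((r0 + δ:ℝ):EReal) :=
      eventually_lt_of_limsup_lt
        (lt_of_le_of_lt keysub (EReal.coe_lt_coe_iff.mpr (by linarith)))
    have hev3 : ∀ᶠ k in atTop, εs (N k) ≤ ε + δ :=
      Tendsto.eventually_le_const (by linarith) (hεs.comp hN.tendsto_atTop)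
    refine le_trans key1 (liminf_le_of_frequently_le ?_)
    apply Eventually.frequently
    filter_upwards [hev2, hev3] with k h2 h3
    calc fs (N k) (zs k) ≤ (⨅ q, fs (N k) q) + ((εs (N k) : ℝ):EReal) := (hmem k).2
      _ ≤ ((r0 + δ : ℝ):EReal) + ((ε + δ : ℝ):EReal) :=
          add_le_add h2.le (EReal.coe_le_coe_iff.mpr h3)
      _ = ((r0 + ε + 2*δ : ℝ):EReal) := by
          rw [← EReal.coe_add]
          exact congrArg _ (by ring)
  have hfz : f z ≤ ((r0 + ε:ℝ):EReal) := by
    by_contra hcon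
    push_neg at hcon
    obtain ⟨y, hy1, hy2⟩ := EReal.exists_between_coe_real hcon
    have hδp : 0 < (y - (r0 + ε))/2 := by
      have : r0 + ε < y := EReal.coe_lt_coe_iff.mp hy1
      linarith
    have hle := hδb _ hδp
    rw [show r0 + ε + 2*((y - (r0+ε))/2) = y by ring] at hle
    exact absurd hy2 (not_lt.mpr hle)
  have hfz_netop : f z ≠ ⊤ := by
    intro hteq
    rw [hteq] at hfz
    exact EReal.coe_ne_top _ (top_le_iff.mp hfz)
  have hz1 : z.1 = 0 := by
    by_contra hz1
    exact hfz_netop (hf_ne z.1 z.2 hz1)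
  have hfzφ : f z = φ z.2 := by
    have hz' : z = ((0 : Fin m → ℝ), z.2) := by rw [← hz1]
    rw [hz', hf0]
  refine ⟨hz1, ?_, ?_⟩
  · intro ht
    exact hfz_netop (hfzφ.trans ht)
  · rw [← hfzφ, ← hr0]
    calc f z ≤ ((r0 + ε:ℝ):EReal) := hfz
      _ = (r0:EReal) + (ε:EReal) := EReal.coe_add r0 ε


end
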